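/- For every k ≥ 2 the operations Δ_2, Δ_3, … on M (the mod-2 chains/homology of a closed compact orientable surface of genus g, with zero differential) satisfy the A∞-coalgebra relation in arity k, i.e. Σ_{i=1}^{k−2} Σ_{j=0}^{k−i−1} (1^{⊗j} ⊗ Δ_{i+1} ⊗ 1^{⊗(k−i−j−1)}) ∘ Δ_{k−i} = 0 on M; thus (M, 0, Δ_2, Δ_3, …) is an A∞-coalgebra over ℤ/2ℤ. -/

import Mathlib

noncomputable section

/-- Generators of the mod-2 chains/homology of the closed orientable surface of genus `g`:
the vertex `v` (degree 0), edges `e i` modelling `e_{i+1}` (degree 1, 0-based indices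
`i : Fin (2*g)`), and the 2-dimensional class `X` (degree 2). -/
inductive OCell (g : ℕ) : Type where
  | v : OCell g
  | e : Fin (2 * g) → OCell g
  | X : OCell g
deriving DecidableEq

/-- `TO g k` models `M^{⊗k}`: the free `ℤ/2ℤ`-module on `k`-tuples of generators. -/
abbrev TO (g k : ℕ) : Type := (Fin k → OCell g) →₀ ZMod 2

/-- The involution `e ↦ ê` on edge indices: `ê_{2t−1} = e_{2t}`, `ê_{2t} = e_{2t−1}`
(0-based: even and odd indices are swapped in pairs). -/
def hatO {g : ℕ} (m : Fin (2 * g)) : Fin (2 * g) :=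
  if h : (m : ℕ) % 2 = 0 then ⟨(m : ℕ) + 1, by have := m.isLt; omega⟩
  else ⟨(m : ℕ) - 1, by have := m.isLt; omega⟩

/-- The `A_∞`-coalgebra operations on the generators: `Δ₂(v) = v ⊗ v`,
`Δ₂(e_i) = v ⊗ e_i + e_i ⊗ v`,
`Δ₂(X) = v ⊗ X + X ⊗ v + Σ_{i=1}^{g} (e_{2i−1} ⊗ e_{2i} + e_{2i} ⊗ e_{2i−1})`; for `k ≥ 3`,
`Δ_k` vanishes on `v` and on each `e_i` and
`Δ_k(X) = Σ_{0<i₁<⋯<i_k≤2g} (e_{i₁} ⊗ ⋯ ⊗ e_{i_k} + ê_{i₁} ⊗ ⋯ ⊗ ê_{i_k})`. -/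
def DeltaOB (g : ℕ) (k : ℕ) : OCell g → TO g k
  | .v => if k = 2 then Finsupp.single (fun _ => OCell.v) 1 else 0
  | .e i =>
      if k = 2 then
        Finsupp.single (fun p : Fin k => if (p : ℕ) = 0 then OCell.v else OCell.e i) 1 +
          Finsupp.single (fun p : Fin k => if (p : ℕ) = 0 then OCell.e i else OCell.v) 1
      else 0
  | .X =>
      if k = 2 then
        Finsupp.single (fun p : Fin k => if (p : ℕ) = 0 then OCell.v else OCell.X) 1 +
          Finsupp.single (fun p : Fin k => if (p : ℕ) = 0 then OCell.X else OCell.v) 1 +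
          ∑ i : Fin g,
            (Finsupp.single (fun p : Fin k =>
                if (p : ℕ) = 0 then OCell.e ⟨2 * (i : ℕ), by have := i.isLt; omega⟩
                else OCell.e ⟨2 * (i : ℕ) + 1, by have := i.isLt; omega⟩) 1 +
              Finsupp.single (fun p : Fin k =>
                if (p : ℕ) = 0 then OCell.e ⟨2 * (i : ℕ) + 1, by have := i.isLt; omega⟩
                else OCell.e ⟨2 * (i : ℕ), by have := i.isLt; omega⟩) 1)
      else
        ∑ f : Fin k → Fin (2 * g),
          if ∀ a b : Fin k, a < b → f a < f b then
            Finsupp.single (fun q : Fin k => OCell.e (f q)) 1 +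
              Finsupp.single (fun q : Fin k => OCell.e (hatO (f q))) 1
          else 0

/-- Splicing a `j`-tuple into a `k`-tuple at position `a`, producing an `m`-tuple
(meaningful when `m = k + j - 1` and `a < k`). -/
def spliceO {g k j : ℕ} (m a : ℕ) (x : Fin k → OCell g) (y : Fin j → OCell g) :
    Fin m → OCell g := fun q =>
  if h1 : (q : ℕ) < a ∧ (q : ℕ) < k then x ⟨q, h1.2⟩
  else if h2 : a ≤ (q : ℕ) ∧ (q : ℕ) - a < j then y ⟨(q : ℕ) - a, h2.2⟩
  else if h3 : (q : ℕ) + 1 - j < k then x ⟨(q : ℕ) + 1 - j, h3⟩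
  else OCell.v

/-- `oppO g k m j a D` is the linear map `1^{⊗a} ⊗ D ⊗ 1^{⊗(k-1-a)} : M^{⊗k} → M^{⊗m}`
(meaningful when `m = k + j - 1`), where `D` is the basis-level description of an operation
`M → M^{⊗j}`; over `ℤ/2ℤ` Koszul signs are irrelevant. -/
def oppO (g k m j a : ℕ) (D : OCell g → TO g j) : TO g k →ₗ[ZMod 2] TO g m :=
  Finsupp.linearCombination (ZMod 2) fun x : Fin k → OCell g =>
    if ha : a < k then Finsupp.mapDomain (spliceO m a x) (D (x ⟨a, ha⟩)) else 0

/-- `Δ_k` as a linear map `M → M^{⊗k}`. -/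
def DmapO (g k : ℕ) : TO g 1 →ₗ[ZMod 2] TO g k :=
  Finsupp.linearCombination (ZMod 2) fun x : Fin 1 → OCell g => DeltaOB g k (x 0)

end

/-! Only `Δ₂` is nonzero on `v` and on the edges `e_i`, and every `Δ_k` with `k ≠ 2` takes values
in tensors of edges. So in arity 3 the relation is the coassociativity of `Δ₂`, and in arity
`k ≥ 4` only two composites survive, `Σ_j (1^{⊗j} ⊗ Δ₂ ⊗ 1^{⊗·}) ∘ Δ_{k-1}` and
`Σ_j (1^{⊗j} ⊗ Δ_{k-1} ⊗ 1^{⊗·}) ∘ Δ₂`. As `Δ₂(e) = v ⊗ e + e ⊗ v`, the first telescopes to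
`w ↦ v ⊗ w + w ⊗ v` applied to `Δ_{k-1}`; the second is the same map, because `Δ_{k-1}` only
sees the summands `v ⊗ X + X ⊗ v` of `Δ₂(X)`. The two copies cancel mod 2. -/

lemma ZModModule.sum_castSucc_add_succ {V : Type*} [AddCommGroup V] [Module (ZMod 2) V]
    {m : ℕ} (F : Fin (m + 1) → V) :
    ∑ j : Fin m, (F j.castSucc + F j.succ) = F 0 + F (Fin.last m) := by
  induction m with
  | zero => simp [ZModModule.add_self]
  | succ m ih =>
    have h := ih (F ∘ Fin.castSucc)
    simp only [Function.comp_apply, ← Fin.succ_castSucc, Fin.castSucc_zero] at h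
    rw [Fin.sum_univ_castSucc, h, Fin.succ_last, ZModModule.add_add_add_cancel]

namespace OCell

open Finsupp

variable {g : ℕ}

lemma pair_eq_vecCons (a b : OCell g) :
    (fun p : Fin 2 => if (p : ℕ) = 0 then a else b) = ![a, b] := by
  funext p
  fin_cases p <;> rfl

lemma DeltaOB_v_two : DeltaOB g 2 v = single ![v, v] 1 := by
  simp only [DeltaOB, if_pos]
  congr 1
  funext p
  fin_cases p <;> rfl

lemma DeltaOB_e_two (i : Fin (2 * g)) :
    DeltaOB g 2 (e i) = single ![v, e i] 1 + single ![e i, v] 1 := by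
  simp only [DeltaOB, if_pos, pair_eq_vecCons]

lemma DeltaOB_X_two :
    DeltaOB g 2 X = single ![v, X] 1 + single ![X, v] 1 +
      ∑ t : Fin g, (single ![e ⟨2 * t, by omega⟩, e ⟨2 * t + 1, by omega⟩] 1 +
        single ![e ⟨2 * t + 1, by omega⟩, e ⟨2 * t, by omega⟩] 1) := by
  simp only [DeltaOB, if_pos, pair_eq_vecCons]

lemma DeltaOB_eq_zero {k : ℕ} (hk : k ≠ 2) {c : OCell g} (hc : c ≠ X) : DeltaOB g k c = 0 := by
  cases c <;> simp_all [DeltaOB]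

lemma oppO_single {k m j a : ℕ} (D : OCell g → TO g j) (x : Fin k → OCell g) (ha : a < k) :
    oppO g k m j a D (single x 1) = mapDomain (spliceO m a x) (D (x ⟨a, ha⟩)) := by
  simp [oppO, ha]

lemma DmapO_single (k : ℕ) (x : Fin 1 → OCell g) (r : ZMod 2) :
    DmapO g k (single x r) = r • DeltaOB g k (x 0) := by
  simp [DmapO]

lemma spliceO_pair_left {m : ℕ} (x : Fin m → OCell g) (j : Fin m) :
    spliceO (m + 1) j x ![v, x j] = Fin.insertNth j.castSucc v x := by
  funext q
  refine Fin.succAboveCases j.castSucc ?_ (fun i => ?_) q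
  · simp [spliceO]
  · rw [Fin.insertNth_apply_succAbove]
    rcases lt_trichotomy i j with h | rfl | h
    · rw [Fin.succAbove_of_castSucc_lt _ _ (by simpa using h)]
      simp [spliceO, h]
    · rw [Fin.succAbove_of_le_castSucc _ _ le_rfl]
      simp [spliceO]
    · rw [Fin.succAbove_of_le_castSucc _ _ (by simpa using h.le)]
      have h' : (j : ℕ) < i := h
      simp only [spliceO, Fin.val_succ]
      rw [dif_neg (by omega), dif_neg (by omega), dif_pos (by omega)]
      simp

lemma spliceO_pair_right {m : ℕ} (x : Fin m → OCell g) (j : Fin m) :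
    spliceO (m + 1) j x ![x j, v] = Fin.insertNth j.succ v x := by
  funext q
  refine Fin.succAboveCases j.succ ?_ (fun i => ?_) q
  · simp [spliceO]
  · rw [Fin.insertNth_apply_succAbove]
    rcases lt_trichotomy i j with h | rfl | h
    · rw [Fin.succAbove_of_castSucc_lt _ _ (by rw [Fin.lt_def]; simp; omega)]
      simp [spliceO, h]
    · rw [Fin.succAbove_of_castSucc_lt _ _ Fin.castSucc_lt_succ]
      simp [spliceO]
    · rw [Fin.succAbove_of_le_castSucc _ _ (by simpa [Fin.le_def] using h)]
      have h' : (j : ℕ) < i := h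
      simp only [spliceO, Fin.val_succ]
      rw [dif_neg (by omega), dif_neg (by omega), dif_pos (by omega)]
      simp

lemma spliceO_v_X {m : ℕ} :
    spliceO (j := m) (m + 1) 1 ![v, X] = Fin.cons (α := fun _ => OCell g) v := by
  funext y q
  refine Fin.cases ?_ (fun i => ?_) q <;> simp [spliceO]

lemma spliceO_X_v {m : ℕ} :
    spliceO (j := m) (m + 1) 0 ![X, v] = fun y => Fin.snoc (α := fun _ => OCell g) y v := by
  funext y q
  refine Fin.lastCases ?_ (fun i => ?_) q <;> simp [spliceO]

lemma spliceO_three_zero (y z : Fin 2 → OCell g) : spliceO 3 0 y z = ![z 0, z 1, y 1] := by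
  funext q
  fin_cases q <;> rfl

lemma spliceO_three_one (y z : Fin 2 → OCell g) : spliceO 3 1 y z = ![y 0, z 0, z 1] := by
  funext q
  fin_cases q <;> rfl

def edgeTuples (g m : ℕ) : Set (Fin m → OCell g) :=
  Set.range fun f : Fin m → Fin (2 * g) => fun q => e (f q)

lemma DeltaOB_mem_supported_edgeTuples {k : ℕ} (hk : k ≠ 2) (c : OCell g) :
    DeltaOB g k c ∈ supported (ZMod 2) (ZMod 2) (edgeTuples g k) := by
  by_cases hc : c = X
  · subst hc
    simp only [DeltaOB, if_neg hk]
    refine Submodule.sum_mem _ fun f _ => ?_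
    split_ifs
    · exact add_mem (single_mem_supported _ _ ⟨f, rfl⟩)
        (single_mem_supported _ _ ⟨fun q => hatO (f q), rfl⟩)
    · exact zero_mem _
  · rw [DeltaOB_eq_zero hk hc]
    exact zero_mem _

lemma oppO_DeltaOB_eq_zero_of_mem_supported {k m I j : ℕ} (hI : I ≠ 2) {w : TO g k}
    (hw : w ∈ supported (ZMod 2) (ZMod 2) (edgeTuples g k)) :
    oppO g k m I j (DeltaOB g I) w = 0 := by
  rw [supported_eq_span_single] at hw
  refine LinearMap.eqOn_span (g := 0) ?_ hw
  rintro _ ⟨_, ⟨f, rfl⟩, rfl⟩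
  by_cases hj : j < k
  · rw [oppO_single _ _ hj, DeltaOB_eq_zero hI (by simp), mapDomain_zero]
    rfl
  · simp [oppO, hj]

lemma oppO_DeltaOB_two_single_of_eq_e {m : ℕ} {x : Fin m → OCell g} (j : Fin m)
    {i : Fin (2 * g)} (hx : x j = e i) :
    oppO g m (m + 1) 2 j (DeltaOB g 2) (single x 1) =
      single (Fin.insertNth j.castSucc v x) 1 + single (Fin.insertNth j.succ v x) 1 := by
  rw [oppO_single _ _ j.isLt, Fin.eta, hx, DeltaOB_e_two, mapDomain_add, mapDomain_single,
    mapDomain_single, ← hx, spliceO_pair_left, spliceO_pair_right]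

-- `w ↦ v ⊗ w + w ⊗ v`
noncomputable def vTensorAddTensorV (g m : ℕ) : TO g m →ₗ[ZMod 2] TO g (m + 1) :=
  lmapDomain (ZMod 2) (ZMod 2) (Fin.cons (α := fun _ => OCell g) v) +
    lmapDomain (ZMod 2) (ZMod 2) fun x => Fin.snoc (α := fun _ => OCell g) x v

lemma sum_oppO_DeltaOB_two_of_mem_supported {m : ℕ} {w : TO g m}
    (hw : w ∈ supported (ZMod 2) (ZMod 2) (edgeTuples g m)) :
    ∑ j ∈ Finset.range m, oppO g m (m + 1) 2 j (DeltaOB g 2) w = vTensorAddTensorV g m w := by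
  rw [supported_eq_span_single] at hw
  rw [← LinearMap.sum_apply]
  refine LinearMap.eqOn_span ?_ hw
  rintro _ ⟨_, ⟨f, rfl⟩, rfl⟩
  rw [LinearMap.sum_apply, Finset.sum_range fun j => oppO g m (m + 1) 2 j (DeltaOB g 2) _]
  simp only [fun j : Fin m => oppO_DeltaOB_two_single_of_eq_e (x := fun q => e (f q)) j rfl]
  rw [ZModModule.sum_castSucc_add_succ fun p => single (Fin.insertNth p v _) 1,
    Fin.insertNth_zero', Fin.insertNth_last']
  simp [vTensorAddTensorV]

lemma sum_oppO_DeltaOB_DeltaOB_two {M : ℕ} (hM : M ≠ 2) (c : OCell g) :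
    ∑ j ∈ Finset.range 2, oppO g 2 (M + 1) M j (DeltaOB g M) (DeltaOB g 2 c) =
      vTensorAddTensorV g M (DeltaOB g M c) := by
  cases c with
  | v => simp [Finset.sum_range_succ, DeltaOB_v_two, oppO_single, DeltaOB_eq_zero hM]
  | e i => simp [Finset.sum_range_succ, DeltaOB_e_two, oppO_single, DeltaOB_eq_zero hM]
  | X =>
    simp [Finset.sum_range_succ, DeltaOB_X_two, oppO_single, DeltaOB_eq_zero hM,
      spliceO_v_X, spliceO_X_v, vTensorAddTensorV, add_comm]

lemma DeltaOB_two_coassoc (c : OCell g) :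
    oppO g 2 3 2 0 (DeltaOB g 2) (DeltaOB g 2 c) =
      oppO g 2 3 2 1 (DeltaOB g 2) (DeltaOB g 2 c) := by
  cases c with
  | v => simp [DeltaOB_v_two, oppO_single, spliceO_three_zero, spliceO_three_one]
  | e i =>
    simp [DeltaOB_v_two, DeltaOB_e_two, oppO_single, spliceO_three_zero, spliceO_three_one,
      mapDomain_add]
    abel
  | X =>
    simp [DeltaOB_v_two, DeltaOB_e_two, DeltaOB_X_two, oppO_single, spliceO_three_zero,
      spliceO_three_one, mapDomain_add, mapDomain_finsetSum, Finset.sum_add_distrib]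
    abel

lemma Ainfinity_relation_DeltaOB (k : ℕ) (hk : 2 ≤ k) (c : OCell g) :
    ∑ i ∈ Finset.Icc 1 (k - 2), ∑ j ∈ Finset.range (k - i),
      oppO g (k - i) k (i + 1) j (DeltaOB g (i + 1)) (DeltaOB g (k - i) c) = 0 := by
  obtain rfl | rfl | ⟨n, rfl⟩ : k = 2 ∨ k = 3 ∨ ∃ n, k = n + 4 :=
    by rcases k with _ | _ | _ | _ | n <;> simp_all
  · simp
  · simp [Finset.sum_range_succ, DeltaOB_two_coassoc c, ZModModule.add_self]
  have hbottom : ∑ j ∈ Finset.range (n + 3), oppO g (n + 3) (n + 4) 2 j (DeltaOB g 2)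
      (DeltaOB g (n + 3) c) = vTensorAddTensorV g (n + 3) (DeltaOB g (n + 3) c) :=
    sum_oppO_DeltaOB_two_of_mem_supported (DeltaOB_mem_supported_edgeTuples (by omega) c)
  have hmiddle : ∑ i ∈ Finset.Icc 2 (n + 1), ∑ j ∈ Finset.range (n + 4 - i),
      oppO g (n + 4 - i) (n + 4) (i + 1) j (DeltaOB g (i + 1)) (DeltaOB g (n + 4 - i) c) = 0 :=
    Finset.sum_eq_zero fun i hi => Finset.sum_eq_zero fun j _ => by
      rw [Finset.mem_Icc] at hi
      exact oppO_DeltaOB_eq_zero_of_mem_supported (by omega)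
        (DeltaOB_mem_supported_edgeTuples (by omega) c)
  have htop : ∑ j ∈ Finset.range 2, oppO g 2 (n + 4) (n + 3) j (DeltaOB g (n + 3))
      (DeltaOB g 2 c) = vTensorAddTensorV g (n + 3) (DeltaOB g (n + 3) c) :=
    sum_oppO_DeltaOB_DeltaOB_two (by omega) c
  rw [show n + 4 - 2 = n + 2 by omega, Finset.sum_Icc_succ_top (by omega),
    ← Finset.insert_Icc_add_one_left_eq_Icc (by omega : 1 ≤ n + 1),
    Finset.sum_insert (by simp), show n + 4 - 1 = n + 3 by omega,
    show n + 4 - (n + 1 + 1) = 2 by omega, show n + 1 + 1 + 1 = n + 3 by omega,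
    show (1 : ℕ) + 1 = 2 from rfl, hbottom, hmiddle, htop,
    add_zero, ZModModule.add_self]

end OCell

theorem orientable_surface_Ainfinity_coalgebra_general (g : ℕ) :
    ∀ k : ℕ, 2 ≤ k →
      ∑ i ∈ Finset.Icc 1 (k - 2), ∑ j ∈ Finset.range (k - i),
        (oppO g (k - i) k (i + 1) j (DeltaOB g (i + 1))) ∘ₗ (DmapO g (k - i)) = 0 := by
  intro k hk
  refine Finsupp.lhom_ext fun x r => ?_
  simp only [LinearMap.sum_apply, LinearMap.comp_apply, LinearMap.zero_apply, OCell.DmapO_single,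
    map_smul, ← Finset.smul_sum, OCell.Ainfinity_relation_DeltaOB k hk, smul_zero]

/-- For every `k ≥ 2` the operations `Δ₂, Δ₃, …` on the mod-2
chains/homology of the closed compact orientable surface of genus `g` (with zero
differential) satisfy the `A_∞`-coalgebra relation in arity `k`:
`Σ_{i=1}^{k−2} Σ_{j=0}^{k−i−1} (1^{⊗j} ⊗ Δ_{i+1} ⊗ 1^{⊗(k−i−j−1)}) ∘ Δ_{k−i} = 0`;
thus `(M, 0, Δ₂, Δ₃, …)` is an `A_∞`-coalgebra over `ℤ/2ℤ`. -/
theorem orientable_surface_Ainfinity_coalgebra (g : ℕ) (hg : 1 ≤ g) :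
    ∀ k : ℕ, 2 ≤ k →
      ∑ i ∈ Finset.Icc 1 (k - 2), ∑ j ∈ Finset.range (k - i),
        (oppO g (k - i) k (i + 1) j (DeltaOB g (i + 1))) ∘ₗ (DmapO g (k - i)) = 0 :=
  orientable_surface_Ainfinity_coalgebra_general g
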